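/- Let a₁ < a₂ < a₃ be positive integers with a₃ ∉ {a₁ + a₂, 2a₁, 2a₂}. Then there exists a real θ such that cos(a₁θ) + cos(a₂θ) + cos(a₃θ) ≤ −3/2. -/

import Mathlib

/-!
Sample at the points θₘ = (2m + 1)π / a₃, m < a₃, where cos (a₃ θₘ) = -1.
The hypotheses say exactly that a₃ divides none of a₁, a₂, 2a₁, 2a₂, a₁ + a₂, a₂ - a₁,
so by discrete orthogonality of cosines g = cos (a₁ θ) + cos (a₂ θ) has mean 0 and
mean square 1 over these points. Since g ≤ 2, the quadratic (g + 1/2)(2 - g) then has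
mean 0, hence is not positive at every point: some θₘ has g ≤ -1/2.
-/

open Finset Real

lemma sum_range_cos_int_mul_odd_mul_pi_div {n : ℕ} {k : ℤ} (hk : ¬ (n : ℤ) ∣ k) :
    ∑ m ∈ range n, cos (k * ((2 * m + 1) * π / n)) = 0 := by
  rcases Nat.eq_zero_or_pos n with rfl | hn
  · simp
  have hn' : (n : ℂ) ≠ 0 := by exact_mod_cast hn.ne'
  set z : ℂ := Complex.exp (2 * π * Complex.I * k / n)
  have hz_pow : z ^ n = 1 := by
    rw [← Complex.exp_nat_mul, ← Complex.exp_int_mul_two_pi_mul_I k]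
    congr 1
    field_simp
  have hz_ne : z ≠ 1 := by
    intro hz
    obtain ⟨t, ht⟩ := Complex.exp_eq_one_iff.1 hz
    refine hk ⟨t, ?_⟩
    field_simp at ht
    exact_mod_cast ht
  have hterm (m : ℕ) :
      cos (k * ((2 * m + 1) * π / n)) = (Complex.exp (π * Complex.I * k / n) * z ^ m).re := by
    rw [← Complex.exp_ofReal_mul_I_re, ← Complex.exp_nat_mul, ← Complex.exp_add]
    congr 2
    push_cast
    field_simp
    ring
  simp_rw [hterm, ← Complex.re_sum, ← mul_sum, geom_sum_eq hz_ne, hz_pow]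
  simp

lemma sum_range_cos_nat_mul_odd_mul_pi_div {n k : ℕ} (hk₀ : 0 < k) (hk : k < 2 * n)
    (hkn : k ≠ n) :
    ∑ m ∈ range n, cos (k * ((2 * m + 1) * π / n)) = 0 := by
  have hndvd : ¬ (n : ℤ) ∣ k := fun h ↦
    hkn (Nat.eq_of_dvd_of_lt_two_mul hk₀.ne' (Int.natCast_dvd_natCast.1 h) hk)
  simpa using sum_range_cos_int_mul_odd_mul_pi_div hndvd

lemma cos_nat_mul_odd_mul_pi_div {n : ℕ} (hn : n ≠ 0) (m : ℕ) :
    cos (n * ((2 * m + 1) * π / n)) = -1 := by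
  have : (n : ℝ) * ((2 * m + 1) * π / n) = π + (m : ℤ) * (2 * π) := by
    field_simp
    push_cast
    ring
  rw [this, cos_add_int_mul_two_pi, cos_pi]

lemma sq_cos_add_cos (u v : ℝ) :
    (cos u + cos v) ^ 2 = 1 + (cos (2 * u) + cos (2 * v)) / 2 + cos (u + v) + cos (v - u) := by
  rw [cos_two_mul, cos_two_mul, cos_add, cos_sub]
  ring

lemma exists_le_neg_half_of_sum_eq_zero_of_sum_sq_eq_card {ι : Type*} {s : Finset ι}
    {g : ι → ℝ} (hs : s.Nonempty) (hg : ∀ i ∈ s, g i ≤ 2) (hsum : ∑ i ∈ s, g i = 0)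
    (hsum_sq : ∑ i ∈ s, g i ^ 2 = #s) : ∃ i ∈ s, g i ≤ -1 / 2 := by
  by_contra! hgt
  have hquad : ∑ i ∈ s, (g i + 1 / 2) * (2 - g i) = 0 := by
    have (i : ι) : (g i + 1 / 2) * (2 - g i) = 3 / 2 * g i - g i ^ 2 + 1 := by ring
    simp_rw [this, sum_add_distrib, sum_sub_distrib, ← mul_sum, hsum, hsum_sq]
    simp
  obtain ⟨j, hj, hgj⟩ : ∃ j ∈ s, g j < 2 :=
    exists_lt_of_sum_lt (by simpa [hsum] using hs.card_pos)
  refine (sum_pos' (fun i hi ↦ ?_) ⟨j, hj, ?_⟩).ne' hquad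
  · nlinarith [hgt i hi, hg i hi]
  · nlinarith [hgt j hj]

theorem case_three_exists_cos_sum_le (a₁ a₂ a₃ : ℕ) (h₁ : 0 < a₁)
    (h₁₂ : a₁ < a₂) (h₂₃ : a₂ < a₃)
    (hsum : a₃ ≠ a₁ + a₂) (h2a₁ : a₃ ≠ 2 * a₁) (h2a₂ : a₃ ≠ 2 * a₂) :
    ∃ θ : ℝ, Real.cos (a₁ * θ) + Real.cos (a₂ * θ) + Real.cos (a₃ * θ) ≤
      -3/2 := by
  set θ : ℕ → ℝ := fun m ↦ (2 * m + 1) * π / a₃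
  set g : ℕ → ℝ := fun m ↦ cos (a₁ * θ m) + cos (a₂ * θ m)
  have hvanish (k : ℕ) (hk : 0 < k ∧ k < 2 * a₃ ∧ k ≠ a₃) :
      ∑ m ∈ range a₃, cos (k * θ m) = 0 :=
    sum_range_cos_nat_mul_odd_mul_pi_div hk.1 hk.2.1 hk.2.2
  have hmean : ∑ m ∈ range a₃, g m = 0 := by
    rw [sum_add_distrib, hvanish a₁ (by omega), hvanish a₂ (by omega), add_zero]
  have hmean_sq : ∑ m ∈ range a₃, g m ^ 2 = #(range a₃) := by
    have hsq (m : ℕ) : g m ^ 2 =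
        1 + (cos ((2 * a₁ : ℕ) * θ m) + cos ((2 * a₂ : ℕ) * θ m)) / 2
        + cos ((a₁ + a₂ : ℕ) * θ m) + cos ((a₂ - a₁ : ℕ) * θ m) := by
      rw [sq_cos_add_cos]
      push_cast [Nat.cast_sub h₁₂.le]
      ring_nf
    simp_rw [hsq, add_div, sum_add_distrib, ← sum_div, hvanish (2 * a₁) (by omega),
      hvanish (2 * a₂) (by omega), hvanish (a₁ + a₂) (by omega),
      hvanish (a₂ - a₁) (by omega)]
    simp
  have hg_le (m : ℕ) (_ : m ∈ range a₃) : g m ≤ 2 := by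
    linarith [cos_le_one (a₁ * θ m), cos_le_one (a₂ * θ m)]
  obtain ⟨m, -, hm⟩ := exists_le_neg_half_of_sum_eq_zero_of_sum_sq_eq_card
    (nonempty_range_iff.2 (by omega)) hg_le hmean hmean_sq
  refine ⟨θ m, ?_⟩
  rw [cos_nat_mul_odd_mul_pi_div (by omega)]
  linarith
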